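/- For the eigenvalue method priority vector w_ev of a reciprocal PC matrix C with κ = 1 − KI(C) > 0, it holds for all i, j that κ·c_{ij} ≤ w_ev(a_i)/w_ev(a_j) ≤ (1/κ)·c_{ij}. -/

import Mathlib

open Finset

noncomputable def KI {n : ℕ} (C : Matrix (Fin n) (Fin n) ℝ) : ℝ :=
  ⨆ i : Fin n, ⨆ j : Fin n, ⨆ k : Fin n,
    min |1 - C i j / (C i k * C k j)| |1 - (C i k * C k j) / C i j|

/-!
Every term of `KI C` is at most `1 - κ`, and `min |1 - x| |1 - x⁻¹| ≤ 1 - κ` forces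
`x ∈ [κ, 2 - κ] ⊆ [κ, κ⁻¹]` or the same for `x⁻¹`; this gives the triad bound
`κ c_ik c_kj ≤ c_ij ≤ κ⁻¹ c_ik c_kj`. Taking `k = j` compares row `i` of `C` termwise with
`c_ij` times row `j`, so `λ w_i = (C w)_i` lies between `κ c_ij λ w_j` and `κ⁻¹ c_ij λ w_j`.
-/

lemma mem_Icc_inv_of_abs_one_sub_le {κ x : ℝ} (hκ : 0 < κ) (h : |1 - x| ≤ 1 - κ) :
    x ∈ Set.Icc κ κ⁻¹ := by
  rw [abs_le] at h
  have h2κ : 2 - κ ≤ κ⁻¹ := by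
    rw [inv_eq_one_div, le_div_iff₀ hκ]
    nlinarith [sq_nonneg (1 - κ)]
  exact ⟨by linarith, by linarith⟩

lemma mem_Icc_inv_of_min_abs_one_sub_le {κ x : ℝ} (hκ : 0 < κ) (hx : 0 < x)
    (h : min |1 - x| |1 - x⁻¹| ≤ 1 - κ) : x ∈ Set.Icc κ κ⁻¹ := by
  rcases min_le_iff.mp h with h | h
  · exact mem_Icc_inv_of_abs_one_sub_le hκ h
  · obtain ⟨hlo, hhi⟩ := mem_Icc_inv_of_abs_one_sub_le hκ h
    exact ⟨(inv_le_inv₀ hx hκ).mp hhi, (le_inv_comm₀ hκ hx).mp hlo⟩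

lemma min_abs_one_sub_le_KI {n : ℕ} (C : Matrix (Fin n) (Fin n) ℝ) (i j k : Fin n) :
    min |1 - C i j / (C i k * C k j)| |1 - (C i k * C k j) / C i j| ≤ KI C := by
  have bdd {α : Type} [Finite α] (f : α → ℝ) : BddAbove (Set.range f) :=
    (Set.finite_range f).bddAbove
  refine le_trans ?_ (le_ciSup (bdd _) i)
  refine le_trans ?_ (le_ciSup (bdd _) j)
  exact le_ciSup (f := fun k ↦ min |1 - C i j / (C i k * C k j)| |1 - (C i k * C k j) / C i j|)
    (bdd _) k

lemma triad_bound {n : ℕ} {C : Matrix (Fin n) (Fin n) ℝ} (hpos : ∀ i j, 0 < C i j)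
    (hκ : 0 < 1 - KI C) (i j k : Fin n) :
    (1 - KI C) * (C i k * C k j) ≤ C i j ∧ C i j ≤ (1 - KI C)⁻¹ * (C i k * C k j) := by
  have hp : 0 < C i k * C k j := mul_pos (hpos i k) (hpos k j)
  have h := min_abs_one_sub_le_KI C i j k
  rw [← inv_div (C i j)] at h
  obtain ⟨hlo, hhi⟩ :=
    mem_Icc_inv_of_min_abs_one_sub_le hκ (div_pos (hpos i j) hp) (by linarith)
  exact ⟨(le_div_iff₀ hp).mp hlo, (div_le_iff₀ hp).mp hhi⟩

section Eigenvector

variable {ι : Type*} [Fintype ι] {A : Matrix ι ι ℝ} {w : ι → ℝ} {lam : ℝ}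

lemma eigenvalue_pos (hA : ∀ i j, 0 < A i j) (hw : ∀ i, 0 < w i)
    (hev : ∀ i, ∑ r, A i r * w r = lam * w i) (i : ι) : 0 < lam := by
  have hsum : 0 < ∑ r, A i r * w r :=
    Finset.sum_pos (fun r _ => mul_pos (hA i r) (hw r)) ⟨i, mem_univ i⟩
  rw [hev i] at hsum
  exact pos_of_mul_pos_left hsum (hw i).le

lemma le_div_of_row_le (hA : ∀ i j, 0 < A i j) (hw : ∀ i, 0 < w i)
    (hev : ∀ i, ∑ r, A i r * w r = lam * w i) {i j : ι} {α : ℝ}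
    (hrow : ∀ r, α * A j r ≤ A i r) : α ≤ w i / w j := by
  have hsum : lam * (α * w j) ≤ lam * w i := by
    rw [mul_left_comm, ← hev i, ← hev j, mul_sum]
    exact sum_le_sum fun r _ => by
      rw [← mul_assoc]; exact mul_le_mul_of_nonneg_right (hrow r) (hw r).le
  rw [le_div_iff₀ (hw j)]
  exact le_of_mul_le_mul_left hsum (eigenvalue_pos hA hw hev i)

lemma div_le_of_row_le (hA : ∀ i j, 0 < A i j) (hw : ∀ i, 0 < w i)
    (hev : ∀ i, ∑ r, A i r * w r = lam * w i) {i j : ι} {β : ℝ}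
    (hrow : ∀ r, A i r ≤ β * A j r) : w i / w j ≤ β := by
  have hsum : lam * w i ≤ lam * (β * w j) := by
    rw [mul_left_comm, ← hev i, ← hev j, mul_sum]
    exact sum_le_sum fun r _ => by
      rw [← mul_assoc]; exact mul_le_mul_of_nonneg_right (hrow r) (hw r).le
  rw [div_le_iff₀ (hw j)]
  exact le_of_mul_le_mul_left hsum (eigenvalue_pos hA hw hev i)

end Eigenvector

theorem evm_ratio_bound_general {n : ℕ} (C : Matrix (Fin n) (Fin n) ℝ)
    (hpos : ∀ i j, 0 < C i j)
    (κ : ℝ) (hκ : κ = 1 - KI C) (hκpos : 0 < κ)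
    (wev : Fin n → ℝ) (hwpos : ∀ i, 0 < wev i) (lam : ℝ)
    (hev : ∀ i, (∑ r, C i r * wev r) = lam * wev i) :
    ∀ i j : Fin n, κ * C i j ≤ wev i / wev j ∧ wev i / wev j ≤ κ⁻¹ * C i j := by
  subst hκ
  intro i j
  constructor
  · refine le_div_of_row_le hpos hwpos hev fun r => ?_
    rw [mul_assoc]; exact (triad_bound hpos hκpos i r j).1
  · refine div_le_of_row_le hpos hwpos hev fun r => ?_
    rw [mul_assoc]; exact (triad_bound hpos hκpos i r j).2

theorem evm_ratio_bound {n : ℕ} (hn : 2 < n) (C : Matrix (Fin n) (Fin n) ℝ)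
    (hpos : ∀ i j, 0 < C i j) (hdiag : ∀ i, C i i = 1)
    (hrec : ∀ i j, C i j * C j i = 1)
    (κ : ℝ) (hκ : κ = 1 - KI C) (hκpos : 0 < κ)
    (wev : Fin n → ℝ) (hwpos : ∀ i, 0 < wev i) (lam : ℝ)
    (hev : ∀ i, (∑ r, C i r * wev r) = lam * wev i) :
    ∀ i j : Fin n, κ * C i j ≤ wev i / wev j ∧ wev i / wev j ≤ κ⁻¹ * C i j :=
  evm_ratio_bound_general C hpos κ hκ hκpos wev hwpos lam hev
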